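/- There exists a universal constant C such that for any finite irreducible reversible chain P, if λ satisfies 1/λ ≥ 100·t_cov, then the expected cover time t_cov^λ of the auxiliary chain P^λ on V ∪ {∂} satisfies t_cov^λ ≤ C/λ. -/

import Mathlib

open scoped BigOperators

/- `pathSum P x t A`: probability, for the chain with transition matrix `P` started
at `x`, of the event `A` about the first `t+1` positions of the trajectory. -/
open Classical in
noncomputable def pathSum {S : Type*} [Fintype S] (P : S → S → ℝ) (x : S) (t : ℕ)
    (A : (Fin (t+1) → S) → Prop) : ℝ :=
  ∑ w : Fin (t+1) → S,
    if w 0 = x ∧ A w then ∏ i : Fin t, P (w i.castSucc) (w i.succ) else 0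

/-- `P_x(τ_cov > t)`: the chain started at `x` has not visited every state by time `t`. -/
noncomputable def coverTail {S : Type*} [Fintype S] (P : S → S → ℝ) (x : S) (t : ℕ) : ℝ :=
  pathSum P x t (fun w => ¬ ∀ v : S, ∃ i, w i = v)

/-- `E_x[τ_cov]`, the expected cover time started from `x`. -/
noncomputable def expCov {S : Type*} [Fintype S] (P : S → S → ℝ) (x : S) : ℝ :=
  ∑' t : ℕ, coverTail P x t

/-- `t_cov = max_x E_x[τ_cov]`. -/
noncomputable def tcov {S : Type*} [Fintype S] [Nonempty S] (P : S → S → ℝ) : ℝ :=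
  ⨆ x : S, expCov P x

/-- The auxiliary transition matrix `P^λ` on `V ∪ {∂}`, where `∂` is modelled by
`none : Option V`. -/
def Plam {V : Type*} (P : V → V → ℝ) (π : V → ℝ) (lam : ℝ) :
    Option V → Option V → ℝ
  | some x, some y => (1 - lam) * P x y
  | some _, none => lam
  | none, some y => π y
  | none, none => 0

/-!
Within `s ≈ 2/λ` steps the chain `P^λ` reaches `∂` except with probability `(1-λ)^s ≤ e^{-2} < 1/4`.
From `∂` it jumps to a `π`-distributed state and then, with probability `(1-λ)^m ≥ 1 - mλ ≥ 9/10`,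
runs `m ≈ 10 t_cov` steps of `P`, which fail to cover `V` with probability at most
`t_cov/(m+1) ≤ 1/10` (Markov's inequality; `E_x[τ_cov] < ∞` by irreducibility). Hence from every
state the probability of not covering by time `t₀ = m + 1 + s` is at most `1/2`, and since
`max_x P_x(τ_cov > t)` is submultiplicative in `t` (Markov property),
`E[τ_cov] ≤ 2 t₀ = O(1/λ)`.
-/

section PathSum

open Classical

variable {S : Type*} [Fintype S] (R : S → S → ℝ)

lemma pathSum_nonneg (hR : ∀ x y, 0 ≤ R x y) (x : S) (t : ℕ) (A : (Fin (t + 1) → S) → Prop) :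
    0 ≤ pathSum R x t A :=
  Finset.sum_nonneg fun _ _ => ite_nonneg (Finset.prod_nonneg fun _ _ => hR _ _) le_rfl

variable {R} in
lemma pathSum_congr {x : S} {t : ℕ} {A B : (Fin (t + 1) → S) → Prop}
    (h : ∀ w, w 0 = x → (A w ↔ B w)) : pathSum R x t A = pathSum R x t B :=
  Finset.sum_congr rfl fun w _ => if_congr (and_congr_right (h w)) rfl rfl

lemma pathSum_mono (hR : ∀ x y, 0 ≤ R x y) {x : S} {t : ℕ} {A B : (Fin (t + 1) → S) → Prop}
    (h : ∀ w, w 0 = x → A w → B w) : pathSum R x t A ≤ pathSum R x t B := by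
  refine Finset.sum_le_sum fun w _ => ?_
  split_ifs with hA hB hB
  · exact le_rfl
  · exact absurd ⟨hA.1, h w hA.1 hA.2⟩ hB
  · exact Finset.prod_nonneg fun _ _ => hR _ _
  · exact le_rfl

lemma pathSum_eq_zero {x : S} {t : ℕ} {A : (Fin (t + 1) → S) → Prop}
    (h : ∀ w, w 0 = x → ¬ A w) : pathSum R x t A = 0 :=
  Finset.sum_eq_zero fun w _ => if_neg fun hw => h w hw.1 hw.2

lemma pathSum_zero (x : S) (A : (Fin 1 → S) → Prop) :
    pathSum R x 0 A = if A (fun _ => x) then 1 else 0 := by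
  unfold pathSum
  rw [Fintype.sum_eq_single (fun _ => x) fun w hw => if_neg fun h => hw (funext fun i => ?_)]
  · simp
  · rw [Fin.fin_one_eq_zero i, h.1]

lemma pathSum_succ (x : S) (t : ℕ) (A : (Fin (t + 2) → S) → Prop) :
    pathSum R x (t + 1) A = ∑ y, R x y * pathSum R y t (fun w => A (Fin.cons x w)) := by
  unfold pathSum
  rw [← (Fin.consEquiv fun _ => S).sum_comp, Fintype.sum_prod_type,
    Fintype.sum_eq_single x fun y hy => Finset.sum_eq_zero fun v _ => if_neg fun h => hy h.1]
  simp only [Finset.mul_sum]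
  rw [Finset.sum_comm]
  refine Finset.sum_congr rfl fun v _ => ?_
  rw [Fintype.sum_eq_single (v 0) fun y hy => by simp [Ne.symm hy]]
  simp [Fin.consEquiv, Fin.prod_univ_succ]

lemma pathSum_true (hR : ∀ x, ∑ y, R x y = 1) (x : S) (t : ℕ) :
    pathSum R x t (fun _ => True) = 1 := by
  induction t generalizing x with
  | zero => simp [pathSum_zero]
  | succ t ih => simp [pathSum_succ, ih, hR x]

lemma pathSum_le_one (hR0 : ∀ x y, 0 ≤ R x y) (hR1 : ∀ x, ∑ y, R x y = 1) (x : S) (t : ℕ)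
    (A : (Fin (t + 1) → S) → Prop) : pathSum R x t A ≤ 1 :=
  (pathSum_mono R hR0 fun _ _ _ => trivial).trans (pathSum_true R hR1 x t).le

lemma pathSum_not (hR : ∀ x, ∑ y, R x y = 1) (x : S) (t : ℕ) (A : (Fin (t + 1) → S) → Prop) :
    pathSum R x t (fun w => ¬ A w) = 1 - pathSum R x t A := by
  rw [← pathSum_true R hR x t, eq_sub_iff_add_eq]
  unfold pathSum
  rw [← Finset.sum_add_distrib]
  refine Finset.sum_congr rfl fun w _ => ?_
  by_cases hw : w 0 = x <;> by_cases hA : A w <;> simp [hw, hA]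

lemma sum_pathSum_last (x : S) (t : ℕ) (A : (Fin (t + 1) → S) → Prop) :
    ∑ y, pathSum R x t (fun w => A w ∧ w (Fin.last t) = y) = pathSum R x t A := by
  unfold pathSum
  rw [Finset.sum_comm]
  refine Finset.sum_congr rfl fun w _ => ?_
  simp [← and_assoc, ite_and]

/-- Markov property at a fixed time `s`. -/
lemma pathSum_split (x : S) (s t : ℕ) (A : (Fin (s + 1) → S) → Prop)
    (B : (Fin (t + 1) → S) → Prop) :
    pathSum R x (t + s) (fun w =>
        A (fun i => w (Fin.castLE (by omega) i)) ∧ B (fun j => w ⟨s + j, by omega⟩)) =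
      ∑ y, pathSum R x s (fun u => A u ∧ u (Fin.last s) = y) * pathSum R y t B := by
  induction s generalizing x with
  | zero =>
    have hA : ∀ w : Fin (t + 1) → S, w 0 = x →
        (fun i : Fin 1 => w (Fin.castLE (by omega) i)) = fun _ => x :=
      fun w hw => funext fun i => by rw [Fin.fin_one_eq_zero i, ← hw]; rfl
    simp only [pathSum_zero, ite_mul, one_mul, zero_mul, ite_and]
    split_ifs with hx
    · rw [Fintype.sum_ite_eq]
      exact pathSum_congr fun w hw => by simp [hA w hw, hx]
    · rw [Finset.sum_const_zero]
      exact pathSum_eq_zero R fun w hw h => hx (hA w hw ▸ h.1)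
  | succ s ih =>
    have hcons : ∀ (w : Fin (t + s + 1) → S) (i : Fin (s + 2)),
        (Fin.cons x w : Fin (t + s + 2) → S) (Fin.castLE (by omega) i) =
          (Fin.cons x (fun i : Fin (s + 1) => w (Fin.castLE (by omega) i)) : Fin (s + 2) → S) i :=
      fun w i => by cases i using Fin.cases <;> simp
    have hshift : ∀ (w : Fin (t + s + 1) → S) (j : Fin (t + 1)),
        (Fin.cons x w : Fin (t + s + 2) → S) ⟨s + 1 + j, by omega⟩ = w ⟨s + j, by omega⟩ := by
      intro w j
      have : (⟨s + 1 + j, by omega⟩ : Fin (t + s + 2)) = Fin.succ ⟨s + j, by omega⟩ :=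
        Fin.ext (by simp only [Fin.val_succ]; omega)
      rw [this, Fin.cons_succ]
    calc _ = ∑ y, R x y * pathSum R y (t + s) (fun w =>
            A (Fin.cons x (fun i => w (Fin.castLE (by omega) i))) ∧
              B (fun j => w ⟨s + j, by omega⟩)) :=
          (pathSum_succ R x (t + s) _).trans (Finset.sum_congr rfl fun y _ =>
            congrArg _ (pathSum_congr fun w _ =>
              and_congr (Iff.of_eq (congrArg A (funext (hcons w))))
                (Iff.of_eq (congrArg B (funext (hshift w))))))
      _ = ∑ y, R x y * ∑ z, pathSum R y s (fun u => A (Fin.cons x u) ∧ u (Fin.last s) = z) *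
            pathSum R z t B :=
          Finset.sum_congr rfl fun y _ => congrArg _ (ih y fun u => A (Fin.cons x u))
      _ = _ := by
        simp only [pathSum_succ, Fin.cons_last, Finset.sum_mul, Finset.mul_sum, mul_assoc]
        exact Finset.sum_comm

lemma pathSum_prefix (hR : ∀ x, ∑ y, R x y = 1) (x : S) (s t : ℕ)
    (A : (Fin (s + 1) → S) → Prop) :
    pathSum R x (t + s) (fun w => A (fun i => w (Fin.castLE (by omega) i))) = pathSum R x s A :=
  calc _ = pathSum R x (t + s) (fun w => A (fun i => w (Fin.castLE (by omega) i)) ∧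
          (fun _ : Fin (t + 1) → S => True) (fun j => w ⟨s + j, by omega⟩)) :=
        pathSum_congr fun _ _ => ⟨fun h => ⟨h, trivial⟩, And.left⟩
    _ = ∑ y, pathSum R x s (fun u => A u ∧ u (Fin.last s) = y) :=
        (pathSum_split R x s t A fun _ => True).trans (by simp only [pathSum_true R hR, mul_one])
    _ = pathSum R x s A := sum_pathSum_last R x s A

lemma pathSum_last_eq_pow [DecidableEq S] (x y : S) (n : ℕ) :
    pathSum R x n (fun w => w (Fin.last n) = y) = (Matrix.of R ^ n) x y := by
  induction n generalizing x with
  | zero => simp [pathSum_zero, Matrix.one_apply]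
  | succ n ih =>
    rw [pathSum_succ, pow_succ', Matrix.mul_apply]
    exact Finset.sum_congr rfl fun z _ => by simp [ih]

end PathSum

lemma Finset.sum_range_mul {M : Type*} [AddCommMonoid M] (f : ℕ → M) (k n : ℕ) :
    ∑ t ∈ range (k * n), f t = ∑ q ∈ range n, ∑ r ∈ range k, f (k * q + r) := by
  induction n with
  | zero => simp
  | succ n ih => rw [Nat.mul_succ, Finset.sum_range_add, ih, Finset.sum_range_succ]

section Cover

variable {S : Type*} [Fintype S] (R : S → S → ℝ)

noncomputable def maxCoverTail (t : ℕ) : ℝ := ⨆ x : S, coverTail R x t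

lemma coverTail_nonneg (hR : ∀ x y, 0 ≤ R x y) (x : S) (t : ℕ) : 0 ≤ coverTail R x t :=
  pathSum_nonneg R hR x t _

lemma coverTail_le_one (hR0 : ∀ x y, 0 ≤ R x y) (hR1 : ∀ x, ∑ y, R x y = 1) (x : S) (t : ℕ) :
    coverTail R x t ≤ 1 :=
  pathSum_le_one R hR0 hR1 x t _

lemma coverTail_eq_one_sub (hR : ∀ x, ∑ y, R x y = 1) (x : S) (t : ℕ) :
    coverTail R x t = 1 - pathSum R x t (fun w => ∀ v, ∃ i, w i = v) :=
  pathSum_not R hR x t _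

lemma coverTail_antitone (hR0 : ∀ x y, 0 ≤ R x y) (hR1 : ∀ x, ∑ y, R x y = 1) (x : S) :
    Antitone (coverTail R x) := by
  intro s t hst
  obtain ⟨d, rfl⟩ := Nat.exists_eq_add_of_le' hst
  calc coverTail R x (d + s)
      ≤ pathSum R x (d + s) (fun w => (fun u : Fin (s + 1) → S => ¬ ∀ v, ∃ i, u i = v)
          (fun i => w (Fin.castLE (by omega) i))) :=
        pathSum_mono R hR0 fun w _ h hu => h fun v => let ⟨_, hi⟩ := hu v; ⟨_, hi⟩
    _ = coverTail R x s := pathSum_prefix R hR1 x s d fun u => ¬ ∀ v, ∃ i, u i = v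

lemma coverTail_le_maxCoverTail (x : S) (t : ℕ) : coverTail R x t ≤ maxCoverTail R t :=
  le_ciSup (f := fun x => coverTail R x t) (Set.finite_range _).bddAbove x

lemma maxCoverTail_le [Nonempty S] {t : ℕ} {c : ℝ} (h : ∀ x, coverTail R x t ≤ c) :
    maxCoverTail R t ≤ c :=
  ciSup_le h

lemma coverTail_add_le (hR : ∀ x y, 0 ≤ R x y) (x : S) (s t : ℕ) :
    coverTail R x (t + s) ≤ coverTail R x s * maxCoverTail R t :=
  calc coverTail R x (t + s)
      ≤ pathSum R x (t + s) (fun w =>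
          (fun u : Fin (s + 1) → S => ¬ ∀ v, ∃ i, u i = v) (fun i => w (Fin.castLE (by omega) i)) ∧
          (fun u : Fin (t + 1) → S => ¬ ∀ v, ∃ i, u i = v) (fun j => w ⟨s + j, by omega⟩)) :=
        pathSum_mono R hR fun w _ h =>
          ⟨fun hu => h fun v => let ⟨_, hi⟩ := hu v; ⟨_, hi⟩,
            fun hu => h fun v => let ⟨_, hi⟩ := hu v; ⟨_, hi⟩⟩
    _ = ∑ y, pathSum R x s (fun u => (¬ ∀ v, ∃ i, u i = v) ∧ u (Fin.last s) = y) *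
          coverTail R y t :=
        pathSum_split R x s t (fun u => ¬ ∀ v, ∃ i, u i = v) fun u => ¬ ∀ v, ∃ i, u i = v
    _ ≤ ∑ y, pathSum R x s (fun u => (¬ ∀ v, ∃ i, u i = v) ∧ u (Fin.last s) = y) *
          maxCoverTail R t := by
        gcongr with y
        · exact pathSum_nonneg R hR x s _
        · exact coverTail_le_maxCoverTail R y t
    _ = coverTail R x s * maxCoverTail R t := by
        rw [← Finset.sum_mul, sum_pathSum_last]
        rfl

lemma coverTail_mul_add_le_pow (hR0 : ∀ x y, 0 ≤ R x y) (hR1 : ∀ x, ∑ y, R x y = 1)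
    {k : ℕ} {θ : ℝ} (hθ : maxCoverTail R k ≤ θ) (x : S) (q r : ℕ) :
    coverTail R x (k * q + r) ≤ θ ^ q := by
  induction q with
  | zero => simpa using coverTail_le_one R hR0 hR1 x r
  | succ q ih =>
    have hMc : 0 ≤ maxCoverTail R k :=
      (coverTail_nonneg R hR0 x k).trans (coverTail_le_maxCoverTail R x k)
    calc coverTail R x (k * (q + 1) + r) = coverTail R x (k + (k * q + r)) := by ring_nf
      _ ≤ coverTail R x (k * q + r) * maxCoverTail R k := coverTail_add_le R hR0 x _ k
      _ ≤ θ ^ q * θ := mul_le_mul ih hθ hMc (pow_nonneg (hMc.trans hθ) q)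
      _ = θ ^ (q + 1) := (pow_succ θ q).symm

lemma sum_range_coverTail_le (hR0 : ∀ x y, 0 ≤ R x y) (hR1 : ∀ x, ∑ y, R x y = 1)
    {k : ℕ} (hk : 0 < k) {θ : ℝ} (hθ0 : 0 ≤ θ) (hθ1 : θ < 1) (hθ : maxCoverTail R k ≤ θ)
    (x : S) (n : ℕ) : ∑ t ∈ Finset.range n, coverTail R x t ≤ k / (1 - θ) :=
  calc ∑ t ∈ Finset.range n, coverTail R x t ≤ ∑ t ∈ Finset.range (k * n), coverTail R x t :=
        Finset.sum_le_sum_of_subset_of_nonneg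
          (Finset.range_subset_range.2 (Nat.le_mul_of_pos_left n hk))
          fun t _ _ => coverTail_nonneg R hR0 x t
    _ = ∑ q ∈ Finset.range n, ∑ r ∈ Finset.range k, coverTail R x (k * q + r) :=
        Finset.sum_range_mul _ k n
    _ ≤ ∑ q ∈ Finset.range n, k * θ ^ q := by
        gcongr with q
        simpa using Finset.sum_le_sum fun r (_ : r ∈ Finset.range k) =>
          coverTail_mul_add_le_pow R hR0 hR1 hθ x q r
    _ ≤ k / (1 - θ) := by
        rw [← Finset.mul_sum, ← mul_one_div, Finset.range_eq_Ico]
        gcongr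
        simpa using geom_sum_Ico_le_of_lt_one (m := 0) (n := n) hθ0 hθ1

lemma summable_coverTail_of_maxCoverTail_lt_one (hR0 : ∀ x y, 0 ≤ R x y)
    (hR1 : ∀ x, ∑ y, R x y = 1) {k : ℕ} (hk : 0 < k) (hlt : maxCoverTail R k < 1) (x : S) :
    Summable (coverTail R x) :=
  summable_of_sum_range_le (coverTail_nonneg R hR0 x)
    (sum_range_coverTail_le R hR0 hR1 hk
      ((coverTail_nonneg R hR0 x k).trans (coverTail_le_maxCoverTail R x k)) hlt le_rfl x)

lemma tcov_le_of_maxCoverTail_le [Nonempty S] (hR0 : ∀ x y, 0 ≤ R x y)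
    (hR1 : ∀ x, ∑ y, R x y = 1) {k : ℕ} (hk : 0 < k) {θ : ℝ} (hθ0 : 0 ≤ θ) (hθ1 : θ < 1)
    (hθ : maxCoverTail R k ≤ θ) : tcov R ≤ k / (1 - θ) :=
  ciSup_le fun x => Real.tsum_le_of_sum_range_le (coverTail_nonneg R hR0 x)
    (sum_range_coverTail_le R hR0 hR1 hk hθ0 hθ1 hθ x)

lemma tcov_nonneg [Nonempty S] (hR : ∀ x y, 0 ≤ R x y) : 0 ≤ tcov R :=
  Real.iSup_nonneg fun x => tsum_nonneg (coverTail_nonneg R hR x)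

lemma mul_coverTail_le_expCov (hR0 : ∀ x y, 0 ≤ R x y) (hR1 : ∀ x, ∑ y, R x y = 1) {x : S}
    (hsum : Summable (coverTail R x)) (t : ℕ) : (t + 1) * coverTail R x t ≤ expCov R x :=
  calc (t + 1) * coverTail R x t = ∑ _s ∈ Finset.range (t + 1), coverTail R x t := by simp
    _ ≤ ∑ s ∈ Finset.range (t + 1), coverTail R x s :=
        Finset.sum_le_sum fun s hs =>
          coverTail_antitone R hR0 hR1 x (Finset.mem_range_succ_iff.1 hs)
    _ ≤ expCov R x := hsum.sum_le_tsum _ fun s _ => coverTail_nonneg R hR0 x s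

lemma maxCoverTail_le_tcov_div [Nonempty S] (hR0 : ∀ x y, 0 ≤ R x y)
    (hR1 : ∀ x, ∑ y, R x y = 1) (hsum : ∀ x, Summable (coverTail R x)) (t : ℕ) :
    maxCoverTail R t ≤ tcov R / (t + 1) :=
  maxCoverTail_le R fun x => by
    rw [le_div_iff₀ (by positivity), mul_comm]
    exact (mul_coverTail_le_expCov R hR0 hR1 (hsum x) t).trans
      (le_ciSup (f := fun x => expCov R x) (Set.finite_range _).bddAbove x)

/-- Split at the first visit to `o`: if it happens by time `s`, the path from there on fails to
cover within `t` steps. -/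
lemma coverTail_add_le_avoid_add (hR0 : ∀ x y, 0 ≤ R x y) (hR1 : ∀ x, ∑ y, R x y = 1)
    (o : S) (t s : ℕ) (x : S) :
    coverTail R x (t + s) ≤ pathSum R x s (fun u => ∀ j, u j ≠ o) + coverTail R o t := by
  induction s generalizing x with
  | zero =>
    rw [Nat.add_zero]
    by_cases hx : x = o
    · subst hx
      rw [pathSum_eq_zero R fun w hw h => h 0 hw, zero_add]
    · rw [pathSum_zero, if_pos fun _ => hx]
      linarith [coverTail_le_one R hR0 hR1 x t, coverTail_nonneg R hR0 o t]
  | succ s ih =>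
    by_cases hx : x = o
    · subst hx
      exact (coverTail_antitone R hR0 hR1 x (by omega)).trans
        (le_add_of_nonneg_left (pathSum_nonneg R hR0 x _ _))
    · calc coverTail R x (t + (s + 1))
          = ∑ y, R x y * pathSum R y (t + s)
              (fun w => ¬ ∀ v, ∃ i, (Fin.cons x w : Fin (t + s + 2) → S) i = v) :=
            pathSum_succ R x (t + s) _
        _ ≤ ∑ y, R x y * (pathSum R y s (fun u => ∀ j, u j ≠ o) + coverTail R o t) := by
            gcongr with y
            · exact hR0 x y
            refine (pathSum_mono R hR0 fun w _ h hc => h fun v => ?_).trans (ih y)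
            obtain ⟨i, hi⟩ := hc v
            exact ⟨i.succ, hi⟩
        _ = pathSum R x (s + 1) (fun u => ∀ j, u j ≠ o) + coverTail R o t := by
            simp [mul_add, Finset.sum_add_distrib, ← Finset.sum_mul, hR1 x, pathSum_succ,
              Fin.forall_fin_succ, hx]

end Cover

section Irreducible

variable {S : Type*} [Fintype S] [DecidableEq S] (R : S → S → ℝ)

lemma exists_pathSum_visits_pos (hR : ∀ x y, 0 ≤ R x y)
    (hirr : ∀ x y, ∃ n : ℕ, 0 < (Matrix.of R ^ n) x y) (s : Finset S) (x : S) :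
    ∃ n, 0 < pathSum R x n (fun w => ∀ v ∈ s, ∃ i, w i = v) := by
  induction s using Finset.induction_on generalizing x with
  | empty => exact ⟨0, by simp [pathSum_zero]⟩
  | insert a s _ ih =>
    obtain ⟨n₁, h₁⟩ := hirr x a
    obtain ⟨n₂, h₂⟩ := ih a
    have hpos : 0 < pathSum R x (n₂ + n₁) (fun w =>
        (fun u : Fin (n₁ + 1) → S => u (Fin.last n₁) = a) (fun i => w (Fin.castLE (by omega) i)) ∧
        (fun u : Fin (n₂ + 1) → S => ∀ v ∈ s, ∃ i, u i = v) (fun j => w ⟨n₁ + j, by omega⟩)) := by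
      rw [pathSum_split R x n₁ n₂ (fun u => u (Fin.last n₁) = a) fun u => ∀ v ∈ s, ∃ i, u i = v]
      refine lt_of_lt_of_le ?_ (Finset.single_le_sum (fun y _ => mul_nonneg
        (pathSum_nonneg R hR x n₁ _) (pathSum_nonneg R hR y n₂ _)) (Finset.mem_univ a))
      simpa [pathSum_last_eq_pow] using mul_pos h₁ h₂
    refine ⟨n₂ + n₁, hpos.trans_le (pathSum_mono R hR fun w _ h v hv => ?_)⟩
    rcases Finset.mem_insert.1 hv with rfl | hv
    · exact ⟨_, h.1⟩
    · obtain ⟨_, hi⟩ := h.2 v hv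
      exact ⟨_, hi⟩

lemma exists_maxCoverTail_lt_one [Nonempty S] (hR0 : ∀ x y, 0 ≤ R x y)
    (hR1 : ∀ x, ∑ y, R x y = 1) (hirr : ∀ x y, ∃ n : ℕ, 0 < (Matrix.of R ^ n) x y) :
    ∃ k, 0 < k ∧ maxCoverTail R k < 1 := by
  have hx : ∀ x, ∃ n, coverTail R x n < 1 := fun x => by
    obtain ⟨n, hn⟩ := exists_pathSum_visits_pos R hR0 hirr Finset.univ x
    refine ⟨n, ?_⟩
    rw [coverTail_eq_one_sub R hR1]
    simpa using hn
  choose n hn using hx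
  refine ⟨Finset.univ.sup n + 1, Nat.succ_pos _, ?_⟩
  obtain ⟨x, hx⟩ :=
    exists_eq_ciSup_of_finite (f := fun x => coverTail R x (Finset.univ.sup n + 1))
  rw [maxCoverTail, ← hx]
  exact (coverTail_antitone R hR0 hR1 x ((Finset.le_sup (Finset.mem_univ x)).trans
    (Nat.le_succ _))).trans_lt (hn x)

end Irreducible

section Auxiliary

variable {V : Type*} (P : V → V → ℝ) (π : V → ℝ) {lam : ℝ}

lemma Plam_nonneg (hP : ∀ x y, 0 ≤ P x y) (hπ : ∀ x, 0 ≤ π x) (hlam0 : 0 ≤ lam)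
    (hlam1 : lam ≤ 1) : ∀ a b, 0 ≤ Plam P π lam a b
  | some x, some y => mul_nonneg (sub_nonneg.2 hlam1) (hP x y)
  | some _, none => hlam0
  | none, some y => hπ y
  | none, none => le_rfl

variable [Fintype V]

lemma sum_Plam (hP : ∀ x, ∑ y, P x y = 1) (hπ : ∑ x, π x = 1) :
    ∀ a, ∑ b, Plam P π lam a b = 1
  | some x => by simp [Fintype.sum_option, Plam, ← Finset.mul_sum, hP x]
  | none => by simp [Fintype.sum_option, Plam, hπ]

open Classical in
lemma pathSum_Plam_avoid_none_and (v : V) (t : ℕ) (A : (Fin (t + 1) → Option V) → Prop) :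
    pathSum (Plam P π lam) (some v) t (fun w => (∀ i, w i ≠ none) ∧ A w) =
      (1 - lam) ^ t * pathSum P v t (fun u => A (some ∘ u)) := by
  unfold pathSum
  rw [Finset.mul_sum]
  refine (Fintype.sum_of_injective (fun u => some ∘ u) (Option.some_injective V).comp_left
    _ _ (fun w hw => if_neg ?_) fun u => ?_).symm
  · rintro ⟨-, hnone, -⟩
    choose u hu using fun i => Option.ne_none_iff_exists.1 (hnone i)
    exact hw ⟨u, funext hu⟩
  · simp [Plam, Finset.prod_mul_distrib]

lemma pathSum_Plam_avoid_none_le (hP : ∀ x, ∑ y, P x y = 1) (hlam : lam ≤ 1) (a : Option V)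
    (t : ℕ) :
    pathSum (Plam P π lam) a t (fun w => ∀ i, w i ≠ none) ≤ (1 - lam) ^ t := by
  cases a with
  | none =>
    rw [pathSum_eq_zero _ fun w hw h => h 0 hw]
    exact pow_nonneg (sub_nonneg.2 hlam) t
  | some v =>
    simpa [pathSum_true P hP] using (pathSum_Plam_avoid_none_and P π v t fun _ => True).le

lemma coverTail_Plam_none_le (hP0 : ∀ x y, 0 ≤ P x y) (hP1 : ∀ x, ∑ y, P x y = 1)
    (hπ0 : ∀ x, 0 ≤ π x) (hπ1 : ∑ x, π x = 1) (hlam0 : 0 ≤ lam) (hlam1 : lam ≤ 1) (m : ℕ) :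
    coverTail (Plam P π lam) none (m + 1) ≤ 1 - (1 - lam) ^ m * (1 - maxCoverTail P m) := by
  rw [coverTail_eq_one_sub _ (sum_Plam P π hP1 hπ1), pathSum_succ, Fintype.sum_option]
  suffices (1 - lam) ^ m * (1 - maxCoverTail P m) ≤ ∑ z, π z * pathSum (Plam P π lam) (some z) m
      (fun w => ∀ a, ∃ i, (Fin.cons none w : Fin (m + 2) → Option V) i = a) by
    simp only [Plam, zero_mul, zero_add]
    linarith
  have hQ := Plam_nonneg P π hP0 hπ0 hlam0 hlam1
  calc (1 - lam) ^ m * (1 - maxCoverTail P m)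
      = ∑ z, π z * ((1 - lam) ^ m * (1 - maxCoverTail P m)) := by
        rw [← Finset.sum_mul, hπ1, one_mul]
    _ ≤ ∑ z, π z * ((1 - lam) ^ m * (1 - coverTail P z m)) := by
        gcongr with z
        · exact hπ0 z
        · exact coverTail_le_maxCoverTail P z m
    _ = ∑ z, π z * pathSum (Plam P π lam) (some z) m
          (fun w => (∀ i, w i ≠ none) ∧ ∀ v, ∃ i, w i = some v) := by
        simp [pathSum_Plam_avoid_none_and, coverTail_eq_one_sub P hP1]
    _ ≤ _ := by
        gcongr with z
        · exact hπ0 z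
        refine pathSum_mono _ hQ fun w _ h a => ?_
        cases a with
        | none => exact ⟨0, rfl⟩
        | some v =>
          obtain ⟨i, hi⟩ := h.2 v
          exact ⟨i.succ, hi⟩

lemma maxCoverTail_Plam_le (hP0 : ∀ x y, 0 ≤ P x y) (hP1 : ∀ x, ∑ y, P x y = 1)
    (hπ0 : ∀ x, 0 ≤ π x) (hπ1 : ∑ x, π x = 1) (hlam0 : 0 ≤ lam) (hlam1 : lam ≤ 1) (m s : ℕ) :
    maxCoverTail (Plam P π lam) (m + 1 + s) ≤
      (1 - lam) ^ s + (1 - (1 - lam) ^ m * (1 - maxCoverTail P m)) :=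
  maxCoverTail_le _ fun a =>
    (coverTail_add_le_avoid_add _ (Plam_nonneg P π hP0 hπ0 hlam0 hlam1) (sum_Plam P π hP1 hπ1)
      none (m + 1) s a).trans
    (add_le_add (pathSum_Plam_avoid_none_le P π hP1 hlam1 a s)
      (coverTail_Plam_none_le P π hP0 hP1 hπ0 hπ1 hlam0 hlam1 m))

lemma one_sub_pow_le_quarter {lam : ℝ} (hlam : lam ≤ 1) {s : ℕ} (hs : 2 ≤ lam * s) :
    (1 - lam) ^ s ≤ 1 / 4 :=
  calc (1 - lam) ^ s ≤ Real.exp (-lam) ^ s :=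
        pow_le_pow_left₀ (sub_nonneg.2 hlam) (by linarith [Real.add_one_le_exp (-lam)]) s
    _ ≤ Real.exp (-1) ^ 2 := by
        rw [← Real.exp_nat_mul, ← Real.exp_nat_mul]
        exact Real.exp_le_exp.2 (by push_cast; linarith)
    _ ≤ (1 / 2) ^ 2 := pow_le_pow_left₀ (Real.exp_pos _).le Real.exp_neg_one_lt_half.le 2
    _ = 1 / 4 := by norm_num

lemma maxCoverTail_Plam_le_half (hP0 : ∀ x y, 0 ≤ P x y) (hP1 : ∀ x, ∑ y, P x y = 1)
    (hπ0 : ∀ x, 0 ≤ π x) (hπ1 : ∑ x, π x = 1) (hlam0 : 0 ≤ lam) (hlam1 : lam ≤ 1) {m s : ℕ}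
    (hPm : maxCoverTail P m ≤ 1 / 10) (hm : m * lam ≤ 1 / 10) (hs : 2 ≤ lam * s) :
    maxCoverTail (Plam P π lam) (m + 1 + s) ≤ 1 / 2 := by
  have hstay : 9 / 10 ≤ (1 - lam) ^ m := by
    have := one_add_mul_le_pow (a := -lam) (by linarith) m
    rw [← sub_eq_add_neg] at this
    linarith
  have hcover : (9 / 10) * (9 / 10) ≤ (1 - lam) ^ m * (1 - maxCoverTail P m) :=
    mul_le_mul hstay (by linarith) (by norm_num) (by linarith)
  linarith [maxCoverTail_Plam_le P π hP0 hP1 hπ0 hπ1 hlam0 hlam1 m s,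
    one_sub_pow_le_quarter hlam1 hs]

lemma tcov_Plam_le (hP0 : ∀ x y, 0 ≤ P x y) (hP1 : ∀ x, ∑ y, P x y = 1)
    (hπ0 : ∀ x, 0 ≤ π x) (hπ1 : ∑ x, π x = 1) (hlam0 : 0 ≤ lam) (hlam1 : lam ≤ 1) {m s : ℕ}
    (hPm : maxCoverTail P m ≤ 1 / 10) (hm : m * lam ≤ 1 / 10) (hs : 2 ≤ lam * s) :
    tcov (Plam P π lam) ≤ 2 * (m + 1 + s) := by
  have := tcov_le_of_maxCoverTail_le _ (Plam_nonneg P π hP0 hπ0 hlam0 hlam1)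
    (sum_Plam P π hP1 hπ1) (by omega) (by norm_num) (by norm_num)
    (maxCoverTail_Plam_le_half P π hP0 hP1 hπ0 hπ1 hlam0 hlam1 hPm hm hs)
  norm_num at this
  linarith

end Auxiliary

/-- There is a universal constant `C` such that for any finite irreducible
reversible chain `P`, if `1/λ ≥ 100·t_cov`, then the expected cover time `t_cov^λ` of the
auxiliary chain `P^λ` on `V ∪ {∂}` satisfies `t_cov^λ ≤ C/λ`. -/
theorem aux_cover_time_bound :
    ∃ C : ℝ, 0 < C ∧
      ∀ (V : Type) [Fintype V] [DecidableEq V] [Nonempty V]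
        (P : V → V → ℝ) (π : V → ℝ),
        (∀ x y, 0 ≤ P x y) → (∀ x, ∑ y, P x y = 1) →
        (∀ x y, ∃ n : ℕ, 0 < (Matrix.of P ^ n) x y) →
        (∀ x, 0 < π x) → (∑ x, π x = 1) →
        (∀ x y, π x * P x y = π y * P y x) →
        ∀ lam : ℝ, 0 < lam → lam < 1 → 100 * tcov P ≤ 1 / lam →
          tcov (Plam P π lam) ≤ C / lam := by
  refine ⟨10, by norm_num, ?_⟩
  intro V _ _ _ P π hP0 hP1 hirr hπ0 hπ1 _ lam hlam0 hlam1 hcov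
  obtain ⟨k, hk, hlt⟩ := exists_maxCoverTail_lt_one P hP0 hP1 hirr
  have hsum := summable_coverTail_of_maxCoverTail_lt_one P hP0 hP1 hk hlt
  rw [le_div_iff₀ hlam0] at hcov
  obtain ⟨m, hm_lt, hm_le⟩ : ∃ m : ℕ, 10 * tcov P < m + 1 ∧ (m : ℝ) ≤ 10 * tcov P :=
    ⟨_, Nat.lt_floor_add_one _, Nat.floor_le (by linarith [tcov_nonneg P hP0])⟩
  obtain ⟨s, hs_ge, hs_lt⟩ : ∃ s : ℕ, 2 / lam ≤ s ∧ (s : ℝ) < 2 / lam + 1 :=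
    ⟨_, Nat.le_ceil _, Nat.ceil_lt_add_one (by positivity)⟩
  have hPm : maxCoverTail P m ≤ 1 / 10 :=
    (maxCoverTail_le_tcov_div P hP0 hP1 hsum m).trans
      ((div_le_iff₀ (by positivity)).2 (by linarith))
  have hlam_s : lam * (2 / lam) = 2 := mul_div_cancel₀ 2 hlam0.ne'
  calc tcov (Plam P π lam) ≤ 2 * (m + 1 + s) :=
        tcov_Plam_le P π hP0 hP1 (fun x => (hπ0 x).le) hπ1 hlam0.le hlam1.le hPm
          (by nlinarith) (by nlinarith [mul_le_mul_of_nonneg_left hs_ge hlam0.le])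
    _ ≤ 10 / lam := by
        rw [le_div_iff₀ hlam0]
        nlinarith [mul_lt_mul_of_pos_left hs_lt hlam0]
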